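/- arXiv:1909.11432 — 3 statements merged into one kernel-verified Lean document; each statement's English description precedes it below -/
import Mathlib

section
/- Let λ > 2 and let Γ be the subgroup of PSL₂(ℝ) generated by T = [[1,λ],[0,1]] and S = [[0,-1],[1,0]]. Then the stabilizer in Γ of the point ∞ ∈ ℝ ∪ {∞} (under the fractional linear action) is the cyclic group generated by T. -/
open Matrix

noncomputable def moebiusAtInfty (g : Matrix.SpecialLinearGroup (Fin 2) ℝ) : OnePoint ℝ :=
  if g.1 1 0 = 0 then OnePoint.infty else OnePoint.some (g.1 0 0 / g.1 1 0)

/-!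
Since `S² = -1`, adjacent factors `S` cancel up to sign, so every element of `⟨T, S⟩` is, up to
sign, either `Tⁿ` or `Tⁿ w` with `w = S T^n₁ S T^n₂ ⋯ S T^nₖ` and `n₁, …, nₖ₋₁ ≠ 0`. For `λ ≥ 2`
such a reduced word `w = [[a, b], [c, d]]` satisfies `|a| < |c|`: prepending `S Tⁿ` with `n ≠ 0`
sends `(a, c)` to `(-c, a + nλc)`, and `|a + nλc| ≥ λ|c| - |a| > |c|`. Hence `c ≠ 0`, and as `Tⁿ`
does not change the lower-left entry, the elements fixing `∞` (those with `c = 0`) are the `±Tⁿ`.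
-/

open MatrixGroups Matrix.SpecialLinearGroup

theorem moebiusAtInfty_eq_infty_iff (g : SL(2, ℝ)) :
    moebiusAtInfty g = OnePoint.infty ↔ g 1 0 = 0 := by
  unfold moebiusAtInfty
  split_ifs with h <;> simp [h]

theorem abs_lt_abs_add_intCast_mul_mul {lam a c : ℝ} {n : ℤ} (hlam : 2 ≤ lam) (hn : n ≠ 0)
    (h : |a| < |c|) : |c| < |a + n * lam * c| := by
  have hn : (1 : ℝ) ≤ |(n : ℝ)| := by exact_mod_cast Int.one_le_abs hn
  calc |c| = 2 * |c| - |c| := by ring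
    _ < 1 * lam * |c| - |a| := by nlinarith [abs_nonneg c]
    _ ≤ |(n : ℝ)| * lam * |c| - |a| := by gcongr
    _ = |n * lam * c| - |a| := by rw [abs_mul, abs_mul, abs_of_nonneg (by linarith : 0 ≤ lam)]
    _ ≤ |a + n * lam * c| := by rw [add_comm]; exact abs_sub_abs_le_abs_add _ _

namespace HeckeGroup

def T (lam : ℝ) : SL(2, ℝ) := ⟨!![1, lam; 0, 1], by norm_num [Matrix.det_fin_two_of]⟩

def S : SL(2, ℝ) := ⟨!![0, -1; 1, 0], by norm_num [Matrix.det_fin_two_of]⟩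

variable {lam : ℝ}

theorem coe_T : (T lam : Matrix (Fin 2) (Fin 2) ℝ) = !![1, lam; 0, 1] := rfl

theorem coe_S : (S : Matrix (Fin 2) (Fin 2) ℝ) = !![0, -1; 1, 0] := rfl

theorem coe_T_zpow (n : ℤ) :
    ((T lam ^ n : SL(2, ℝ)) : Matrix (Fin 2) (Fin 2) ℝ) = !![1, n * lam; 0, 1] := by
  induction n with
  | zero => simp [Matrix.one_fin_two]
  | succ n ih =>
    rw [_root_.zpow_add_one, coe_mul, ih, coe_T, Matrix.mul_fin_two]
    congrm !![?_, ?_; ?_, ?_] <;> push_cast <;> ring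
  | pred n ih =>
    rw [_root_.zpow_sub_one, coe_mul, ih, coe_inv, coe_T, adjugate_fin_two, Matrix.mul_fin_two]
    congrm !![?_, ?_; ?_, ?_] <;> simp
    ring

theorem S_mul_S : S * S = -1 := by
  ext i j
  fin_cases i <;> fin_cases j <;> simp [coe_S]

theorem S_inv : S⁻¹ = -S :=
  inv_eq_of_mul_eq_one_right (by rw [mul_neg, S_mul_S, neg_neg])

theorem S_mul_apply_zero_zero (g : SL(2, ℝ)) : (S * g) 0 0 = -g 1 0 := by
  simp [coe_S, Matrix.mul_apply]

theorem S_mul_apply_one_zero (g : SL(2, ℝ)) : (S * g) 1 0 = g 0 0 := by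
  simp [coe_S, Matrix.mul_apply]

theorem T_zpow_mul_apply_zero_zero (n : ℤ) (g : SL(2, ℝ)) :
    (T lam ^ n * g) 0 0 = g 0 0 + n * lam * g 1 0 := by
  rw [coe_mul, coe_T_zpow]
  simp [Matrix.mul_apply]

theorem T_zpow_mul_apply_one_zero (n : ℤ) (g : SL(2, ℝ)) : (T lam ^ n * g) 1 0 = g 1 0 := by
  rw [coe_mul, coe_T_zpow]
  simp [Matrix.mul_apply]

inductive IsReducedWord (lam : ℝ) : SL(2, ℝ) → Prop
  | S_mul_T_zpow (m : ℤ) : IsReducedWord lam (S * T lam ^ m)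
  | S_mul_T_zpow_mul (n : ℤ) (hn : n ≠ 0) {h : SL(2, ℝ)} (hh : IsReducedWord lam h) :
      IsReducedWord lam (S * (T lam ^ n * h))

theorem IsReducedWord.abs_apply_zero_zero_lt (hlam : 2 ≤ lam) {h : SL(2, ℝ)}
    (hh : IsReducedWord lam h) : |h 0 0| < |h 1 0| := by
  induction hh with
  | S_mul_T_zpow m => simp [S_mul_apply_zero_zero, S_mul_apply_one_zero, coe_T_zpow]
  | S_mul_T_zpow_mul n hn _ ih =>
    rw [S_mul_apply_zero_zero, S_mul_apply_one_zero, T_zpow_mul_apply_one_zero,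
      T_zpow_mul_apply_zero_zero, abs_neg]
    exact abs_lt_abs_add_intCast_mul_mul hlam hn ih

theorem IsReducedWord.apply_one_zero_ne_zero (hlam : 2 ≤ lam) {h : SL(2, ℝ)}
    (hh : IsReducedWord lam h) : h 1 0 ≠ 0 :=
  abs_pos.mp ((abs_nonneg _).trans_lt (hh.abs_apply_zero_zero_lt hlam))

def IsNormalWord (lam : ℝ) (g : SL(2, ℝ)) : Prop :=
  (∃ n : ℤ, g = T lam ^ n) ∨ ∃ (n : ℤ) (h : SL(2, ℝ)), IsReducedWord lam h ∧ g = T lam ^ n * h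

theorem IsNormalWord.T_zpow_mul {g : SL(2, ℝ)} (hg : IsNormalWord lam g) (k : ℤ) :
    IsNormalWord lam (T lam ^ k * g) := by
  rcases hg with ⟨n, rfl⟩ | ⟨n, h, hh, rfl⟩
  · exact Or.inl ⟨k + n, (_root_.zpow_add _ _ _).symm⟩
  · exact Or.inr ⟨k + n, h, hh, by rw [← mul_assoc, ← _root_.zpow_add]⟩

theorem IsNormalWord.S_mul {g : SL(2, ℝ)} (hg : IsNormalWord lam g) :
    IsNormalWord lam (S * g) ∨ IsNormalWord lam (-(S * g)) := by
  rcases hg with ⟨n, rfl⟩ | ⟨n, h, hh, rfl⟩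
  · exact Or.inl (Or.inr ⟨0, _, .S_mul_T_zpow n, by rw [zpow_zero, one_mul]⟩)
  obtain rfl | hn := eq_or_ne n 0
  · right
    rw [zpow_zero, one_mul]
    cases hh with
    | S_mul_T_zpow m => exact Or.inl ⟨m, by rw [← mul_assoc, S_mul_S, neg_one_mul, neg_neg]⟩
    | S_mul_T_zpow_mul m _ hh' =>
      exact Or.inr ⟨m, _, hh', by rw [← mul_assoc, S_mul_S, neg_one_mul, neg_neg]⟩
  · exact Or.inl (Or.inr ⟨0, _, .S_mul_T_zpow_mul n hn hh, by rw [zpow_zero, one_mul]⟩)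

def IsNormalWordUpToSign (lam : ℝ) (g : SL(2, ℝ)) : Prop :=
  IsNormalWord lam g ∨ IsNormalWord lam (-g)

theorem IsNormalWordUpToSign.neg {g : SL(2, ℝ)} (hg : IsNormalWordUpToSign lam g) :
    IsNormalWordUpToSign lam (-g) := by
  rwa [IsNormalWordUpToSign, neg_neg, or_comm]

theorem IsNormalWordUpToSign.T_zpow_mul {g : SL(2, ℝ)} (hg : IsNormalWordUpToSign lam g)
    (k : ℤ) : IsNormalWordUpToSign lam (T lam ^ k * g) := by
  rcases hg with hg | hg
  · exact Or.inl (hg.T_zpow_mul k)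
  · exact Or.inr (by simpa only [mul_neg] using hg.T_zpow_mul k)

theorem IsNormalWordUpToSign.S_mul {g : SL(2, ℝ)} (hg : IsNormalWordUpToSign lam g) :
    IsNormalWordUpToSign lam (S * g) := by
  rcases hg with hg | hg
  · exact hg.S_mul
  · simpa only [mul_neg, neg_neg] using IsNormalWordUpToSign.neg hg.S_mul

theorem isNormalWordUpToSign_of_mem_closure {g : SL(2, ℝ)}
    (hg : g ∈ Subgroup.closure {T lam, S}) : IsNormalWordUpToSign lam g := by
  induction hg using Subgroup.closure_induction_left with
  | one => exact Or.inl (Or.inl ⟨0, (zpow_zero _).symm⟩)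
  | mul_left x hx y _ ih =>
    rcases hx with rfl | rfl
    · simpa only [zpow_one] using ih.T_zpow_mul 1
    · exact ih.S_mul
  | inv_mul_cancel x hx y _ ih =>
    rcases hx with rfl | rfl
    · simpa only [_root_.zpow_neg_one] using ih.T_zpow_mul (-1)
    · simpa only [S_inv, neg_mul] using ih.S_mul.neg

theorem IsNormalWord.eq_T_zpow_of_apply_one_zero_eq_zero (hlam : 2 ≤ lam) {g : SL(2, ℝ)}
    (hg : IsNormalWord lam g) (hg0 : g 1 0 = 0) : ∃ n : ℤ, g = T lam ^ n := by
  rcases hg with hg | ⟨n, h, hh, rfl⟩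
  · exact hg
  · rw [T_zpow_mul_apply_one_zero] at hg0
    exact absurd hg0 (hh.apply_one_zero_ne_zero hlam)

theorem mem_closure_apply_one_zero_eq_zero_iff (hlam : 2 ≤ lam) {g : SL(2, ℝ)}
    (hg : g ∈ Subgroup.closure {T lam, S}) :
    g 1 0 = 0 ↔ ∃ n : ℤ, g = T lam ^ n ∨ g = -T lam ^ n := by
  constructor
  · intro hg0
    rcases isNormalWordUpToSign_of_mem_closure hg with hpos | hneg
    · obtain ⟨n, rfl⟩ := hpos.eq_T_zpow_of_apply_one_zero_eq_zero hlam hg0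
      exact ⟨n, Or.inl rfl⟩
    · obtain ⟨n, hn⟩ := hneg.eq_T_zpow_of_apply_one_zero_eq_zero hlam (by simp [coe_neg, hg0])
      exact ⟨n, Or.inr (neg_eq_iff_eq_neg.mp hn)⟩
  · rintro ⟨n, rfl | rfl⟩ <;> simp [coe_neg, coe_T_zpow]

end HeckeGroup

open HeckeGroup in
/-- for λ > 2 and Γ the Hecke triangle group generated (in PSL₂(ℝ)) by
T = [[1,λ],[0,1]] and S = [[0,-1],[1,0]], the stabilizer of ∞ in Γ is the cyclic
group generated by T.  (Working with SL₂(ℝ)-representatives, an element of the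
projective group is a power of T exactly if a representative is ±Tⁿ.) -/
theorem statement1 (lam : ℝ) (hlam : 2 < lam) :
    let T : Matrix.SpecialLinearGroup (Fin 2) ℝ :=
      ⟨!![1, lam; 0, 1], by norm_num [Matrix.det_fin_two_of]⟩
    let S : Matrix.SpecialLinearGroup (Fin 2) ℝ :=
      ⟨!![0, -1; 1, 0], by norm_num [Matrix.det_fin_two_of]⟩
    ∀ g ∈ Subgroup.closure {T, S},
      (moebiusAtInfty g = OnePoint.infty ↔
        ∃ n : ℤ, g.1 = (T ^ n).1 ∨ g.1 = -((T ^ n).1)) := by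
  intro _ _ g hg
  rw [moebiusAtInfty_eq_infty_iff, mem_closure_apply_one_zero_eq_zero_iff hlam.le hg]
  exact exists_congr fun _ ↦
    or_congr Subtype.ext_iff (Subtype.ext_iff.trans (by rw [coe_neg]; rfl))
end

section
/- Let Γ be a group, M a right Γ-module, and Ξ a nonempty set with a left Γ-action. Suppose c : Ξ × Ξ → M is a Γ-equivariant 1-cocycle (as above) and suppose the associated group cocycle ψ_g = c(g⁻¹ξ₀, ξ₀) is a group coboundary, i.e. there exists m ∈ M with ψ_g = m|1 − m|g for all g ∈ Γ. Then c is a coboundary on Ξ: there exists a Γ-equivariant map f : Ξ → M (meaning f(g⁻¹ξ) = f(ξ)|g) such that c(ξ,η) = f(ξ) − f(η) for all ξ, η ∈ Ξ. -/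
/-- let Γ be a group, M a right Γ-module, Ξ a nonempty set with a left
Γ-action, and c : Ξ × Ξ → M a Γ-equivariant 1-cocycle.  If the associated group
cocycle ψ_g = c(g⁻¹ξ₀, ξ₀) is a group coboundary, ψ_g = m − m|g for some m ∈ M,
then c is a coboundary on Ξ: there is a Γ-equivariant map f : Ξ → M
(f(g⁻¹ξ) = f(ξ)|g) with c(ξ,η) = f(ξ) − f(η). -/
theorem statement7 {Γ Ξ M : Type*} [Group Γ] [AddCommGroup M]
    (act : Γ → Ξ → Ξ)
    (hact_one : ∀ ξ, act 1 ξ = ξ)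
    (hact_mul : ∀ g h ξ, act (g * h) ξ = act g (act h ξ))
    (rmul : M → Γ → M)
    (hr_one : ∀ v, rmul v 1 = v)
    (hr_mul : ∀ v g h, rmul v (g * h) = rmul (rmul v g) h)
    (hr_add : ∀ v w g, rmul (v + w) g = rmul v g + rmul w g)
    (c : Ξ → Ξ → M)
    (hcoc : ∀ ξ η ζ, c ξ η + c η ζ = c ξ ζ)
    (hequiv : ∀ g ξ η, rmul (c ξ η) g = c (act g⁻¹ ξ) (act g⁻¹ η))
    (ξ₀ : Ξ) (m : M)
    (hcob : ∀ g : Γ, c (act g⁻¹ ξ₀) ξ₀ = m - rmul m g) :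
    ∃ f : Ξ → M, (∀ g ξ, f (act g⁻¹ ξ) = rmul (f ξ) g) ∧
      ∀ ξ η, c ξ η = f ξ - f η := by
  have hsub : ∀ v w g, rmul (v - w) g = rmul v g - rmul w g := by
    intro v w g
    have h := hr_add (v - w) w g
    rw [sub_add_cancel] at h
    exact eq_sub_of_add_eq h.symm
  refine ⟨fun ξ => c ξ ξ₀ - m, ?_, ?_⟩
  · intro g ξ
    have h1 : c (act g⁻¹ ξ) (act g⁻¹ ξ₀) + c (act g⁻¹ ξ₀) ξ₀ = c (act g⁻¹ ξ) ξ₀ :=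
      hcoc _ _ _
    rw [← hequiv, hcob] at h1
    show c (act g⁻¹ ξ) ξ₀ - m = rmul (c ξ ξ₀ - m) g
    rw [hsub, ← h1]
    abel
  · intro ξ η
    have h4 := hcoc ξ η ξ₀
    show c ξ η = (c ξ ξ₀ - m) - (c η ξ₀ - m)
    rw [← h4]
    abel
end

section
/- Let λ > 2 and let f₁ : (−1, ∞) → ℂ and f₂ : (−∞, 1) → ℂ be continuous and satisfy the two relations f₁(x) = (λ+x)^{−2s}f₁(−1/(λ+x)) + f₁(x+λ) + (λ+x)^{−2s}f₂(−1/(λ+x)) on (−1,∞) and f₂(x) = (λ−x)^{−2s}f₁(1/(λ−x)) + f₂(x−λ) + (λ−x)^{−2s}f₂(1/(λ−x)) on (−∞,1), for a fixed s ∈ ℂ. Let θ⁺ = (λ+√(λ²−4))/2. Then there exist unique continuous extensions f̃₁ : (−θ⁺, ∞) → ℂ and f̃₂ : (−∞, θ⁺) → ℂ of f₁, f₂ such that (f̃₁, f̃₂) satisfies the same two relations on (−θ⁺,∞) × (−∞, θ⁺). -/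
/-!
For `x > -θ⁺` we have `x + λ > -1` and `-1/(λ+x) ∈ (-θ⁺, 0)`, so on `(-θ⁺, ∞)` the first relation
sees `f₂` only through its given values and takes the form `g = c · (g ∘ φ) + F` with
`φ x = -1/(λ+x)`. Because `φ x + θ⁺ = θ⁺ (x + θ⁺)/(λ+x)`, the distance of an orbit point in
`(-θ⁺, -1]` to `-θ⁺` grows by a factor at least `θ⁺/(λ-1) > 1` per step, so every `φ`-orbit started
in `(-θ⁺, ∞)` enters `(-1, ∞)`, where `g = f₁` is prescribed. Unfolding the relation along the orbit
therefore determines `g` uniquely, and locally it is a finite expression in continuous functions.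
The second relation is the mirror image of the first under `x ↦ -x`.
-/

open Set Function Filter Topology

section FunctionalEquation

variable {X R : Type*} [Semiring R] {U V : Set X} {φ : X → X} {c F f g : X → R}

def unfoldRel (c : X → R) (φ : X → X) (F f : X → R) : ℕ → X → R
  | 0, x => f x
  | n + 1, x => c x * unfoldRel c φ F f n (φ x) + F x

theorem unfoldRel_eq_of_mem (hφV : MapsTo φ V V) (hf : ∀ x ∈ V, f x = c x * f (φ x) + F x) :
    ∀ n, ∀ x ∈ V, unfoldRel c φ F f n x = f x
  | 0, _, _ => rfl
  | n + 1, x, hx => by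
    rw [unfoldRel, unfoldRel_eq_of_mem hφV hf n (φ x) (hφV hx), ← hf x hx]

theorem unfoldRel_eq_of_le (hφV : MapsTo φ V V) (hf : ∀ x ∈ V, f x = c x * f (φ x) + F x) :
    ∀ {n m : ℕ}, n ≤ m → ∀ {x : X}, φ^[n] x ∈ V →
      unfoldRel c φ F f m x = unfoldRel c φ F f n x
  | 0, m, _, x, hx => unfoldRel_eq_of_mem hφV hf m x hx
  | n + 1, m + 1, h, x, hx => by
    rw [unfoldRel, unfoldRel, unfoldRel_eq_of_le hφV hf (Nat.le_of_succ_le_succ h) hx]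

theorem eq_unfoldRel_of_iterate_mem (hφU : MapsTo φ U U) (hgf : EqOn g f V)
    (hg : ∀ x ∈ U, g x = c x * g (φ x) + F x) :
    ∀ {n : ℕ} {x : X}, x ∈ U → φ^[n] x ∈ V → g x = unfoldRel c φ F f n x
  | 0, _, _, hx => hgf hx
  | n + 1, x, hxU, hx => by
    rw [hg x hxU, eq_unfoldRel_of_iterate_mem hφU hgf hg (hφU hxU) hx, unfoldRel]

-- `0` is a junk value at points whose orbit never meets `V`.
open scoped Classical in
noncomputable def extendRel (c : X → R) (φ : X → X) (F f : X → R) (V : Set X) (x : X) : R :=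
  if h : ∃ n, φ^[n] x ∈ V then unfoldRel c φ F f (Nat.find h) x else 0

open scoped Classical in
theorem extendRel_eq_unfoldRel (hφV : MapsTo φ V V) (hf : ∀ x ∈ V, f x = c x * f (φ x) + F x)
    {n : ℕ} {x : X} (hx : φ^[n] x ∈ V) : extendRel c φ F f V x = unfoldRel c φ F f n x := by
  have h : ∃ n, φ^[n] x ∈ V := ⟨n, hx⟩
  rw [extendRel, dif_pos h]
  exact (unfoldRel_eq_of_le hφV hf (Nat.find_min' h hx) (Nat.find_spec h)).symm

theorem extendRel_eqOn (hφV : MapsTo φ V V) (hf : ∀ x ∈ V, f x = c x * f (φ x) + F x) :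
    EqOn (extendRel c φ F f V) f V := fun _ hx =>
  extendRel_eq_unfoldRel (n := 0) hφV hf hx

theorem extendRel_eq (hφU : MapsTo φ U U) (hφV : MapsTo φ V V)
    (hf : ∀ x ∈ V, f x = c x * f (φ x) + F x) (hesc : ∀ x ∈ U, ∃ n, φ^[n] x ∈ V) {x : X}
    (hx : x ∈ U) : extendRel c φ F f V x = c x * extendRel c φ F f V (φ x) + F x := by
  obtain ⟨n, hn⟩ := hesc (φ x) (hφU hx)
  rw [extendRel_eq_unfoldRel (n := n + 1) hφV hf hn, extendRel_eq_unfoldRel hφV hf hn, unfoldRel]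

theorem forall_eq_iff_eqOn_extendRel (hφU : MapsTo φ U U) (hφV : MapsTo φ V V)
    (hf : ∀ x ∈ V, f x = c x * f (φ x) + F x) (hesc : ∀ x ∈ U, ∃ n, φ^[n] x ∈ V)
    (hgf : EqOn g f V) :
    (∀ x ∈ U, g x = c x * g (φ x) + F x) ↔ EqOn g (extendRel c φ F f V) U := by
  refine ⟨fun hg x hx => ?_, fun hg x hx => ?_⟩
  · obtain ⟨n, hn⟩ := hesc x hx
    rw [eq_unfoldRel_of_iterate_mem hφU hgf hg hx hn, extendRel_eq_unfoldRel hφV hf hn]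
  · rw [hg hx, hg (hφU hx), extendRel_eq hφU hφV hf hesc hx]

variable [TopologicalSpace X] [TopologicalSpace R] [IsTopologicalSemiring R]

theorem continuousAt_unfoldRel (hU : IsOpen U) (hV : IsOpen V) (hφU : MapsTo φ U U)
    (hφ : ContinuousOn φ U) (hc : ContinuousOn c U) (hF : ContinuousOn F U)
    (hf : ContinuousOn f V) :
    ∀ {n : ℕ} {x : X}, x ∈ U → φ^[n] x ∈ V → ContinuousAt (unfoldRel c φ F f n) x
  | 0, _, _, hx => hf.continuousAt (hV.mem_nhds hx)
  | n + 1, x, hxU, hx => by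
    have hxU' := hU.mem_nhds hxU
    exact ((hc.continuousAt hxU').mul ((continuousAt_unfoldRel hU hV hφU hφ hc hF hf
      (hφU hxU) hx).comp (hφ.continuousAt hxU'))).add (hF.continuousAt hxU')

theorem continuousOn_extendRel (hU : IsOpen U) (hV : IsOpen V) (hφU : MapsTo φ U U)
    (hφV : MapsTo φ V V) (hφ : ContinuousOn φ U) (hc : ContinuousOn c U)
    (hF : ContinuousOn F U) (hfc : ContinuousOn f V) (hf : ∀ x ∈ V, f x = c x * f (φ x) + F x)
    (hesc : ∀ x ∈ U, ∃ n, φ^[n] x ∈ V) : ContinuousOn (extendRel c φ F f V) U := by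
  intro x hx
  obtain ⟨n, hn⟩ := hesc x hx
  have hev : unfoldRel c φ F f n =ᶠ[𝓝 x] extendRel c φ F f V :=
    eventually_of_mem (((hφ.iterate hφU n).continuousAt (hU.mem_nhds hx)).preimage_mem_nhds
      (hV.mem_nhds hn)) fun y hy => (extendRel_eq_unfoldRel hφV hf hy).symm
  exact ((continuousAt_unfoldRel hU hV hφU hφ hc hF hfc hx hn).congr hev).continuousWithinAt

end FunctionalEquation

theorem continuousOn_ofReal_cpow {S : Set ℝ} {u : ℝ → ℝ} (hu : ContinuousOn u S)
    (hpos : ∀ x ∈ S, 0 < u x) (z : ℂ) : ContinuousOn (fun x => ((u x : ℝ) : ℂ) ^ z) S :=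
  (Complex.continuous_ofReal.comp_continuousOn hu).cpow_const fun x hx =>
    Complex.ofReal_mem_slitPlane.2 (hpos x hx)

noncomputable def thetaPlus (lam : ℝ) : ℝ := (lam + √(lam ^ 2 - 4)) / 2

def TransferEq₁ (lam : ℝ) (s : ℂ) (g₁ g₂ : ℝ → ℂ) (x : ℝ) : Prop :=
  g₁ x = ((lam + x : ℝ) : ℂ) ^ (-2 * s) * g₁ (-1 / (lam + x)) + g₁ (x + lam)
    + ((lam + x : ℝ) : ℂ) ^ (-2 * s) * g₂ (-1 / (lam + x))

def TransferEq₂ (lam : ℝ) (s : ℂ) (g₁ g₂ : ℝ → ℂ) (x : ℝ) : Prop :=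
  g₂ x = ((lam - x : ℝ) : ℂ) ^ (-2 * s) * g₁ (1 / (lam - x)) + g₂ (x - lam)
    + ((lam - x : ℝ) : ℂ) ^ (-2 * s) * g₂ (1 / (lam - x))

section Extension

variable {lam : ℝ} {s : ℂ} {f₁ f₂ g₁ g₂ : ℝ → ℂ}

theorem thetaPlus_mul_sub (hlam : 2 < lam) : thetaPlus lam * (lam - thetaPlus lam) = 1 := by
  have := Real.sq_sqrt (by nlinarith : (0 : ℝ) ≤ lam ^ 2 - 4)
  unfold thetaPlus
  linear_combination -this / 4

theorem sub_one_lt_thetaPlus (hlam : 2 < lam) : lam - 1 < thetaPlus lam := by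
  have : lam - 2 < √(lam ^ 2 - 4) := Real.lt_sqrt_of_sq_lt (by nlinarith)
  unfold thetaPlus
  linarith

theorem lam_add_pos (hlam : 2 < lam) {x : ℝ} (hx : -thetaPlus lam < x) : 0 < lam + x := by
  nlinarith [thetaPlus_mul_sub hlam, sub_one_lt_thetaPlus hlam]

theorem lam_sub_pos (hlam : 2 < lam) {x : ℝ} (hx : x < thetaPlus lam) : 0 < lam - x := by
  simpa [sub_eq_add_neg] using lam_add_pos hlam (neg_lt_neg hx)

theorem neg_one_div_add_thetaPlus (hlam : 2 < lam) {x : ℝ} (hx : lam + x ≠ 0) :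
    -1 / (lam + x) + thetaPlus lam = thetaPlus lam * (x + thetaPlus lam) / (lam + x) := by
  field_simp
  linear_combination thetaPlus_mul_sub hlam

theorem mapsTo_neg_one_div_Ioi_neg_thetaPlus (hlam : 2 < lam) :
    MapsTo (fun x => -1 / (lam + x)) (Ioi (-thetaPlus lam)) (Ioi (-thetaPlus lam)) := by
  intro x (hx : -thetaPlus lam < x)
  have hpos := lam_add_pos hlam hx
  have hθ := sub_one_lt_thetaPlus hlam
  have : 0 < thetaPlus lam * (x + thetaPlus lam) / (lam + x) :=
    div_pos (mul_pos (by linarith) (by linarith)) hpos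
  show -thetaPlus lam < -1 / (lam + x)
  linarith [neg_one_div_add_thetaPlus hlam hpos.ne']

theorem exists_iterate_neg_one_div_gt (hlam : 2 < lam) {x : ℝ} (hx : -thetaPlus lam < x) :
    ∃ n, -1 < (fun y => -1 / (lam + y))^[n] x := by
  set θ := thetaPlus lam
  set φ : ℝ → ℝ := fun y => -1 / (lam + y)
  by_contra! h
  have hθ : lam - 1 < θ := sub_one_lt_thetaPlus hlam
  have hq : 1 < θ / (lam - 1) := by rw [one_lt_div (by linarith)]; exact hθ
  have hgrow : ∀ n, (θ / (lam - 1)) ^ n * (x + θ) ≤ φ^[n] x + θ := by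
    intro n
    induction n with
    | zero => simp
    | succ n ih =>
      set y := φ^[n] x
      have hy : -θ < y := (mapsTo_neg_one_div_Ioi_neg_thetaPlus hlam).iterate n hx
      have hpos := lam_add_pos hlam hy
      rw [iterate_succ_apply', neg_one_div_add_thetaPlus hlam hpos.ne']
      calc (θ / (lam - 1)) ^ (n + 1) * (x + θ)
          = θ / (lam - 1) * ((θ / (lam - 1)) ^ n * (x + θ)) := by ring
        _ ≤ θ / (lam - 1) * (y + θ) := by gcongr
        _ ≤ θ / (lam + y) * (y + θ) := by
            have : y ≤ -1 := h n
            gcongr <;> linarith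
        _ = θ * (y + θ) / (lam + y) := by ring
  obtain ⟨n, hn⟩ := pow_unbounded_of_one_lt ((θ - 1) / (x + θ)) hq
  rw [div_lt_iff₀ (by linarith)] at hn
  linarith [hgrow n, h n]

theorem mapsTo_neg_one_div_Ioi_neg_one (hlam : 2 < lam) :
    MapsTo (fun x => -1 / (lam + x)) (Ioi (-1)) (Ioi (-1)) := by
  intro x (hx : -1 < x)
  show -1 < -1 / (lam + x)
  rw [lt_div_iff₀ (by linarith)]
  linarith

theorem semiconj_neg_neg_one_div :
    Semiconj Neg.neg (fun x => -1 / (lam + x)) (fun x => 1 / (lam - x)) := fun x => by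
  simp only
  ring

theorem mapsTo_one_div_Iio_thetaPlus (hlam : 2 < lam) :
    MapsTo (fun x => 1 / (lam - x)) (Iio (thetaPlus lam)) (Iio (thetaPlus lam)) := by
  intro x (hx : x < thetaPlus lam)
  have := mapsTo_neg_one_div_Ioi_neg_thetaPlus hlam (neg_lt_neg hx)
  rw [mem_Iio, ← neg_neg x, ← semiconj_neg_neg_one_div]
  exact neg_lt_of_neg_lt this

theorem mapsTo_one_div_Iio_one (hlam : 2 < lam) :
    MapsTo (fun x => 1 / (lam - x)) (Iio 1) (Iio 1) := by
  intro x (hx : x < 1)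
  show 1 / (lam - x) < 1
  rw [div_lt_iff₀ (by linarith)]
  linarith

theorem exists_iterate_one_div_lt (hlam : 2 < lam) {x : ℝ} (hx : x < thetaPlus lam) :
    ∃ n, (fun y => 1 / (lam - y))^[n] x < 1 := by
  obtain ⟨n, hn⟩ := exists_iterate_neg_one_div_gt hlam (neg_lt_neg hx)
  refine ⟨n, ?_⟩
  rw [← neg_neg x, ← (semiconj_neg_neg_one_div.iterate_right n) (-x)]
  exact neg_lt_of_neg_lt hn

theorem transferEq₁_iff (hlam : 2 < lam) (hg₁ : EqOn g₁ f₁ (Ioi (-1)))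
    (hg₂ : EqOn g₂ f₂ (Iio 1)) {x : ℝ} (hx : -thetaPlus lam < x) :
    TransferEq₁ lam s g₁ g₂ x ↔ g₁ x = ((lam + x : ℝ) : ℂ) ^ (-2 * s) * g₁ (-1 / (lam + x))
      + (f₁ (x + lam) + ((lam + x : ℝ) : ℂ) ^ (-2 * s) * f₂ (-1 / (lam + x))) := by
  have hpos := lam_add_pos hlam hx
  rw [TransferEq₁, hg₁ (show -1 < x + lam by linarith),
    hg₂ ((div_neg_of_neg_of_pos neg_one_lt_zero hpos).trans one_pos), add_assoc]

theorem transferEq₂_iff (hlam : 2 < lam) (hg₁ : EqOn g₁ f₁ (Ioi (-1)))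
    (hg₂ : EqOn g₂ f₂ (Iio 1)) {x : ℝ} (hx : x < thetaPlus lam) :
    TransferEq₂ lam s g₁ g₂ x ↔ g₂ x = ((lam - x : ℝ) : ℂ) ^ (-2 * s) * g₂ (1 / (lam - x))
      + (f₂ (x - lam) + ((lam - x : ℝ) : ℂ) ^ (-2 * s) * f₁ (1 / (lam - x))) := by
  have hpos := lam_sub_pos hlam hx
  rw [TransferEq₂, hg₁ ((one_div_pos.2 hpos).trans' neg_one_lt_zero),
    hg₂ (show x - lam < 1 by linarith)]
  constructor <;> intro h <;> linear_combination h

theorem exists_extension₁ (hlam : 2 < lam) (hc₁ : ContinuousOn f₁ (Ioi (-1)))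
    (hc₂ : ContinuousOn f₂ (Iio 1)) (h₁ : ∀ x ∈ Ioi (-1), TransferEq₁ lam s f₁ f₂ x) :
    ∃ g, ContinuousOn g (Ioi (-thetaPlus lam)) ∧ EqOn g f₁ (Ioi (-1)) ∧
      ∀ g₁ g₂, EqOn g₁ f₁ (Ioi (-1)) → EqOn g₂ f₂ (Iio 1) →
        ((∀ x ∈ Ioi (-thetaPlus lam), TransferEq₁ lam s g₁ g₂ x) ↔
          EqOn g₁ g (Ioi (-thetaPlus lam))) := by
  have hVU : Ioi (-1) ⊆ Ioi (-thetaPlus lam) :=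
    Ioi_subset_Ioi (by linarith [sub_one_lt_thetaPlus hlam])
  have hφU := mapsTo_neg_one_div_Ioi_neg_thetaPlus hlam
  have hφV := mapsTo_neg_one_div_Ioi_neg_one hlam
  have hesc := fun x (hx : -thetaPlus lam < x) => exists_iterate_neg_one_div_gt hlam hx
  have hf := fun x hx => (transferEq₁_iff hlam (eqOn_refl _ _) (eqOn_refl _ _) (hVU hx)).1 (h₁ x hx)
  have hφ : ContinuousOn (fun x => -1 / (lam + x)) (Ioi (-thetaPlus lam)) :=
    continuousOn_const.div (by fun_prop) fun x hx => (lam_add_pos hlam hx).ne'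
  have hc := continuousOn_ofReal_cpow (by fun_prop) (fun x hx => lam_add_pos hlam hx) (-2 * s)
  have hF : ContinuousOn (fun x => f₁ (x + lam)
      + ((lam + x : ℝ) : ℂ) ^ (-2 * s) * f₂ (-1 / (lam + x))) (Ioi (-thetaPlus lam)) :=
    (hc₁.comp (by fun_prop) fun x (hx : _ < x) => show -1 < x + lam by
      linarith [lam_add_pos hlam hx]).add
    (hc.mul (hc₂.comp hφ fun x hx => ((div_neg_of_neg_of_pos neg_one_lt_zero
      (lam_add_pos hlam hx)).trans one_pos :)))
  refine ⟨_, continuousOn_extendRel isOpen_Ioi isOpen_Ioi hφU hφV hφ hc hF hc₁ hf hesc,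
    extendRel_eqOn hφV hf, fun g₁ g₂ hg₁ hg₂ => ?_⟩
  rw [← forall_eq_iff_eqOn_extendRel hφU hφV hf hesc hg₁]
  exact forall₂_congr fun x hx => transferEq₁_iff hlam hg₁ hg₂ hx

theorem exists_extension₂ (hlam : 2 < lam) (hc₁ : ContinuousOn f₁ (Ioi (-1)))
    (hc₂ : ContinuousOn f₂ (Iio 1)) (h₂ : ∀ x ∈ Iio 1, TransferEq₂ lam s f₁ f₂ x) :
    ∃ g, ContinuousOn g (Iio (thetaPlus lam)) ∧ EqOn g f₂ (Iio 1) ∧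
      ∀ g₁ g₂, EqOn g₁ f₁ (Ioi (-1)) → EqOn g₂ f₂ (Iio 1) →
        ((∀ x ∈ Iio (thetaPlus lam), TransferEq₂ lam s g₁ g₂ x) ↔
          EqOn g₂ g (Iio (thetaPlus lam))) := by
  have hpos : ∀ x ∈ Iio (thetaPlus lam), 0 < lam - x := fun x hx => lam_sub_pos hlam hx
  have hVU : Iio 1 ⊆ Iio (thetaPlus lam) :=
    Iio_subset_Iio (by linarith [sub_one_lt_thetaPlus hlam])
  have hφU := mapsTo_one_div_Iio_thetaPlus hlam
  have hφV := mapsTo_one_div_Iio_one hlam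
  have hesc := fun x (hx : x < thetaPlus lam) => exists_iterate_one_div_lt hlam hx
  have hf := fun x hx =>
    (transferEq₂_iff hlam (eqOn_refl _ _) (eqOn_refl _ _) (hVU hx)).1 (h₂ x hx)
  have hφ : ContinuousOn (fun x => 1 / (lam - x)) (Iio (thetaPlus lam)) :=
    continuousOn_const.div (by fun_prop) fun x hx => (hpos x hx).ne'
  have hc := continuousOn_ofReal_cpow (by fun_prop) hpos (-2 * s)
  have hF : ContinuousOn (fun x => f₂ (x - lam)
      + ((lam - x : ℝ) : ℂ) ^ (-2 * s) * f₁ (1 / (lam - x))) (Iio (thetaPlus lam)) :=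
    (hc₂.comp (by fun_prop) fun x hx => show x - lam < 1 by linarith [hpos x hx]).add
    (hc.mul (hc₁.comp hφ fun x hx => ((one_div_pos.2 (hpos x hx)).trans' neg_one_lt_zero :)))
  refine ⟨_, continuousOn_extendRel isOpen_Iio isOpen_Iio hφU hφV hφ hc hF hc₂ hf hesc,
    extendRel_eqOn hφV hf, fun g₁ g₂ hg₁ hg₂ => ?_⟩
  rw [← forall_eq_iff_eqOn_extendRel hφU hφV hf hesc hg₂]
  exact forall₂_congr fun x hx => transferEq₂_iff hlam hg₁ hg₂ hx

end Extension

/-- let λ > 2 and let f₁ : (−1,∞) → ℂ, f₂ : (−∞,1) → ℂ be continuous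
solutions of the slow transfer operator fixed point equations.  With
θ⁺ = (λ + √(λ²−4))/2, there are unique continuous extensions g₁ on (−θ⁺,∞) and
g₂ on (−∞,θ⁺) satisfying the same two relations on (−θ⁺,∞) × (−∞,θ⁺). -/
theorem statement17 (lam : ℝ) (hlam : 2 < lam) (s : ℂ) (f₁ f₂ : ℝ → ℂ)
    (hc1 : ContinuousOn f₁ (Set.Ioi (-1 : ℝ)))
    (hc2 : ContinuousOn f₂ (Set.Iio (1 : ℝ)))
    (h1 : ∀ x ∈ Set.Ioi (-1 : ℝ),
      f₁ x = ((lam + x : ℝ) : ℂ) ^ (-2 * s) * f₁ (-1 / (lam + x))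
          + f₁ (x + lam)
          + ((lam + x : ℝ) : ℂ) ^ (-2 * s) * f₂ (-1 / (lam + x)))
    (h2 : ∀ x ∈ Set.Iio (1 : ℝ),
      f₂ x = ((lam - x : ℝ) : ℂ) ^ (-2 * s) * f₁ (1 / (lam - x))
          + f₂ (x - lam)
          + ((lam - x : ℝ) : ℂ) ^ (-2 * s) * f₂ (1 / (lam - x))) :
    let θp : ℝ := (lam + Real.sqrt (lam ^ 2 - 4)) / 2
    let Ext : (ℝ → ℂ) → (ℝ → ℂ) → Prop := fun g₁ g₂ =>
      ContinuousOn g₁ (Set.Ioi (-θp)) ∧ ContinuousOn g₂ (Set.Iio θp) ∧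
      (∀ x ∈ Set.Ioi (-1 : ℝ), g₁ x = f₁ x) ∧
      (∀ x ∈ Set.Iio (1 : ℝ), g₂ x = f₂ x) ∧
      (∀ x ∈ Set.Ioi (-θp),
        g₁ x = ((lam + x : ℝ) : ℂ) ^ (-2 * s) * g₁ (-1 / (lam + x))
            + g₁ (x + lam)
            + ((lam + x : ℝ) : ℂ) ^ (-2 * s) * g₂ (-1 / (lam + x))) ∧
      (∀ x ∈ Set.Iio θp,
        g₂ x = ((lam - x : ℝ) : ℂ) ^ (-2 * s) * g₁ (1 / (lam - x))
            + g₂ (x - lam)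
            + ((lam - x : ℝ) : ℂ) ^ (-2 * s) * g₂ (1 / (lam - x)))
    ∃ g₁ g₂ : ℝ → ℂ, Ext g₁ g₂ ∧
      ∀ g₁' g₂' : ℝ → ℂ, Ext g₁' g₂' →
        (∀ x ∈ Set.Ioi (-θp), g₁' x = g₁ x) ∧ (∀ x ∈ Set.Iio θp, g₂' x = g₂ x) := by
  intro θp Ext
  obtain ⟨g₁, hg₁c, hg₁f, hg₁⟩ := exists_extension₁ hlam hc1 hc2 h1
  obtain ⟨g₂, hg₂c, hg₂f, hg₂⟩ := exists_extension₂ hlam hc1 hc2 h2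
  refine ⟨g₁, g₂, ⟨hg₁c, hg₂c, hg₁f, hg₂f, (hg₁ g₁ g₂ hg₁f hg₂f).2 (eqOn_refl _ _),
    (hg₂ g₁ g₂ hg₁f hg₂f).2 (eqOn_refl _ _)⟩, ?_⟩
  rintro g₁' g₂' ⟨-, -, hg₁f', hg₂f', h₁', h₂'⟩
  exact ⟨(hg₁ g₁' g₂' hg₁f' hg₂f').1 h₁', (hg₂ g₁' g₂' hg₁f' hg₂f').1 h₂'⟩
end
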